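/- If M is invertible (m = n), the proximal sequence Φ_{k+1} = (I + μMᵀM)^{-1}(Φ_k + μMᵀ) with constant μ > 0 converges to M^{-1} from any initial point Φ_0, and ‖Φ_{k} − M^{-1}‖_F ≤ (1/(1 + α₁μ))^k ‖Φ_0 − M^{-1}‖_F where α₁ is the smallest eigenvalue of MᵀM. -/

import Mathlib

/-! The proximal step is the affine map `Φ ↦ A⁻¹ (Φ + μ Mᵀ)` with `A = 1 + μ MᵀM`, and `M⁻¹` is
its fixed point, so the error `Φ k - M⁻¹` is multiplied by `A⁻¹` at every step. Since
`MᵀM ≥ α₁`, the quadratic form of `A` is bounded below by `c = 1 + α₁ μ`; by Cauchy–Schwarz,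
`‖A w‖ ≥ c ‖w‖` for every vector and hence, column by column, `‖A Z‖_F ≥ c ‖Z‖_F`. Thus `A⁻¹`
contracts the Frobenius norm by `1 / c < 1`. -/

open Matrix

attribute [local instance] Matrix.frobeniusNormedAddCommGroup

/-- `P` is the Moore–Penrose pseudo-inverse of `M` (the four Penrose conditions). -/
def IsMoorePenrose {m n : ℕ} (M : Matrix (Fin m) (Fin n) ℝ)
    (P : Matrix (Fin n) (Fin m) ℝ) : Prop :=
  M * P * M = M ∧ P * M * P = P ∧ (M * P)ᵀ = M * P ∧ (P * M)ᵀ = P * M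

namespace Matrix

variable {m n p : Type*} [Fintype m] [Fintype n] [Fintype p]

theorem IsHermitian.mul_dotProduct_self_le_dotProduct_mulVec [DecidableEq n]
    {B : Matrix n n ℝ} (hB : B.IsHermitian) {α : ℝ}
    (hα : ∀ (β : ℝ) (v : n → ℝ), v ≠ 0 → B *ᵥ v = β • v → α ≤ β) (w : n → ℝ) :
    α * (w ⬝ᵥ w) ≤ w ⬝ᵥ (B *ᵥ w) := by
  have hC : (B - α • 1).IsHermitian := hB.sub (isHermitian_one.smul (IsSelfAdjoint.all α))
  -- an eigenvector of `B - α • 1` is one of `B`, with the eigenvalue shifted by `α`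
  have hpsd : (B - α • 1).PosSemidef := by
    refine hC.posSemidef_iff_eigenvalues_nonneg.mpr fun i => ?_
    have hv := hC.mulVec_eigenvectorBasis i
    rw [sub_mulVec, smul_mulVec, one_mulVec, sub_eq_iff_eq_add, ← add_smul] at hv
    have hne : ⇑(hC.eigenvectorBasis i) ≠ 0 := fun h =>
      hC.eigenvectorBasis.orthonormal.ne_zero i (WithLp.ofLp_eq_zero 2 |>.mp h)
    simpa using hα _ _ hne hv
  have := hpsd.dotProduct_mulVec_nonneg w
  simp only [star_trivial, sub_mulVec, smul_mulVec, one_mulVec, dotProduct_sub,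
    dotProduct_smul, smul_eq_mul] at this
  linarith

theorem frobenius_norm_sq_eq_sum_dotProduct (Z : Matrix n p ℝ) :
    ‖Z‖ ^ 2 = ∑ j, Zᵀ j ⬝ᵥ Zᵀ j := by
  rw [frobenius_norm_def, ← Real.rpow_natCast, ← Real.rpow_mul (by positivity), Finset.sum_comm]
  norm_num [dotProduct, ← pow_two]

theorem mul_frobenius_norm_le_frobenius_norm_mul {A : Matrix m n ℝ} {c : ℝ} (hc : 0 ≤ c)
    (hA : ∀ w : n → ℝ, c ^ 2 * (w ⬝ᵥ w) ≤ (A *ᵥ w) ⬝ᵥ (A *ᵥ w)) (Z : Matrix n p ℝ) :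
    c * ‖Z‖ ≤ ‖A * Z‖ := by
  have hcol : ∀ j, (A * Z)ᵀ j = A *ᵥ Zᵀ j := fun j => by
    ext i
    simp [mul_apply, mulVec, dotProduct]
  refine (pow_le_pow_iff_left₀ (by positivity) (norm_nonneg _) two_ne_zero).mp ?_
  rw [mul_pow, frobenius_norm_sq_eq_sum_dotProduct, frobenius_norm_sq_eq_sum_dotProduct,
    Finset.mul_sum]
  exact Finset.sum_le_sum fun j _ => (hcol j).symm ▸ hA (Zᵀ j)

section Coercive

variable {A : Matrix n n ℝ} {c : ℝ}

theorem isUnit_of_mul_dotProduct_self_le [DecidableEq n] (hc : 0 < c)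
    (hA : ∀ w : n → ℝ, c * (w ⬝ᵥ w) ≤ w ⬝ᵥ (A *ᵥ w)) : IsUnit A := by
  refine mulVec_injective_iff_isUnit.mp fun v w hvw => ?_
  have h := hA (v - w)
  rw [mulVec_sub, hvw, sub_self, dotProduct_zero] at h
  have hsq : (v - w) ⬝ᵥ (v - w) = 0 :=
    (nonpos_of_mul_nonpos_right h hc).antisymm
      (by simpa using dotProduct_star_self_nonneg (v - w))
  exact sub_eq_zero.mp (dotProduct_self_eq_zero.mp hsq)

theorem sq_mul_dotProduct_self_le_of_mul_dotProduct_self_le (hc : 0 ≤ c)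
    (hA : ∀ w : n → ℝ, c * (w ⬝ᵥ w) ≤ w ⬝ᵥ (A *ᵥ w)) (w : n → ℝ) :
    c ^ 2 * (w ⬝ᵥ w) ≤ (A *ᵥ w) ⬝ᵥ (A *ᵥ w) := by
  have hcs : (w ⬝ᵥ (A *ᵥ w)) ^ 2 ≤ (w ⬝ᵥ w) * ((A *ᵥ w) ⬝ᵥ (A *ᵥ w)) := by
    simpa only [dotProduct, pow_two] using Finset.sum_mul_sq_le_sq_mul_sq Finset.univ w (A *ᵥ w)
  have hw : 0 ≤ w ⬝ᵥ w := by simpa using dotProduct_star_self_nonneg w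
  rcases hw.eq_or_lt with h0 | h0
  · rw [← h0, mul_zero]
    simpa using dotProduct_star_self_nonneg (A *ᵥ w)
  · nlinarith [mul_self_le_mul_self (mul_nonneg hc hw) (hA w)]

theorem frobenius_norm_inv_mul_le [DecidableEq n] (hc : 0 < c)
    (hA : ∀ w : n → ℝ, c * (w ⬝ᵥ w) ≤ w ⬝ᵥ (A *ᵥ w)) (X : Matrix n p ℝ) :
    ‖A⁻¹ * X‖ ≤ c⁻¹ * ‖X‖ := by
  have hdet : IsUnit A.det := (isUnit_iff_isUnit_det A).mp (isUnit_of_mul_dotProduct_self_le hc hA)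
  have h := mul_frobenius_norm_le_frobenius_norm_mul hc.le
    (sq_mul_dotProduct_self_le_of_mul_dotProduct_self_le hc.le hA) (A⁻¹ * X)
  rw [← Matrix.mul_assoc, mul_nonsing_inv A hdet, Matrix.one_mul] at h
  rwa [le_inv_mul_iff₀ hc]

theorem frobenius_norm_sub_le_of_eq_inv_mul_add [DecidableEq n] (hc : 0 < c)
    (hA : ∀ w : n → ℝ, c * (w ⬝ᵥ w) ≤ w ⬝ᵥ (A *ᵥ w)) {P Q : Matrix n p ℝ}
    (hP : A * P = P + Q) {Φ : ℕ → Matrix n p ℝ} (hΦ : ∀ k, Φ (k + 1) = A⁻¹ * (Φ k + Q))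
    (k : ℕ) : ‖Φ k - P‖ ≤ (1 / c) ^ k * ‖Φ 0 - P‖ := by
  have hfix : A⁻¹ * (P + Q) = P := by
    rw [← hP, ← Matrix.mul_assoc, nonsing_inv_mul A ((isUnit_iff_isUnit_det A).mp
      (isUnit_of_mul_dotProduct_self_le hc hA)), Matrix.one_mul]
  refine le_geom (u := fun k => ‖Φ k - P‖) (by positivity) k fun j _ => ?_
  have herr : Φ (j + 1) - P = A⁻¹ * (Φ j - P) :=
    calc Φ (j + 1) - P = A⁻¹ * (Φ j + Q) - A⁻¹ * (P + Q) := by rw [hΦ, hfix]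
      _ = A⁻¹ * (Φ j - P) := by rw [← Matrix.mul_sub, add_sub_add_right_eq_sub]
  simpa only [herr, one_div] using frobenius_norm_inv_mul_le hc hA (Φ j - P)

end Coercive

end Matrix

theorem tendsto_of_norm_sub_le_pow_mul {E : Type*} [SeminormedAddCommGroup E] {x : ℕ → E}
    {a : E} {r C : ℝ} (hr₀ : 0 ≤ r) (hr₁ : r < 1) (hx : ∀ k, ‖x k - a‖ ≤ r ^ k * C) :
    Filter.Tendsto x Filter.atTop (nhds a) := by
  have hlim := (tendsto_pow_atTop_nhds_zero_of_lt_one hr₀ hr₁).mul_const C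
  rw [zero_mul] at hlim
  exact tendsto_sub_nhds_zero_iff.mp (squeeze_zero_norm hx hlim)

theorem stmt18_general {n : ℕ} (M : Matrix (Fin n) (Fin n) ℝ) (hM : IsUnit M)
    (μ α₁ : ℝ) (hμ : 0 < μ) (hα₁ : 0 < α₁)
    (hmin : ∀ (β : ℝ) (v : Fin n → ℝ), v ≠ 0 → (Mᵀ * M) *ᵥ v = β • v → α₁ ≤ β)
    (Φ : ℕ → Matrix (Fin n) (Fin n) ℝ)
    (hrec : ∀ k, Φ (k + 1) = (1 + μ • (Mᵀ * M))⁻¹ * (Φ k + μ • Mᵀ)) :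
    Filter.Tendsto Φ Filter.atTop (nhds M⁻¹) ∧
    ∀ k, ‖Φ k - M⁻¹‖ ≤ (1 / (1 + α₁ * μ)) ^ k * ‖Φ 0 - M⁻¹‖ := by
  have hc : 0 < 1 + α₁ * μ := by positivity
  have hB : (Mᵀ * M).IsHermitian := by simpa using isHermitian_conjTranspose_mul_self M
  have hcoer (w : Fin n → ℝ) :
      (1 + α₁ * μ) * (w ⬝ᵥ w) ≤ w ⬝ᵥ ((1 + μ • (Mᵀ * M)) *ᵥ w) := by
    have hα := hB.mul_dotProduct_self_le_dotProduct_mulVec hmin w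
    simp only [add_mulVec, one_mulVec, smul_mulVec, dotProduct_add, dotProduct_smul, smul_eq_mul]
    linarith [mul_le_mul_of_nonneg_left hα hμ.le]
  have hfix : (1 + μ • (Mᵀ * M)) * M⁻¹ = M⁻¹ + μ • Mᵀ := by
    rw [add_mul, one_mul, smul_mul, Matrix.mul_assoc,
      mul_nonsing_inv M ((isUnit_iff_isUnit_det M).mp hM), Matrix.mul_one]
  have hbound := frobenius_norm_sub_le_of_eq_inv_mul_add hc hcoer hfix hrec
  have hrate : 1 / (1 + α₁ * μ) < 1 := (div_lt_one hc).mpr (by nlinarith)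
  exact ⟨tendsto_of_norm_sub_le_pow_mul (by positivity) hrate hbound, hbound⟩

theorem stmt18 {n : ℕ} (M : Matrix (Fin n) (Fin n) ℝ) (hM : IsUnit M)
    (μ α₁ : ℝ) (hμ : 0 < μ) (hα₁ : 0 < α₁)
    (heig : ∃ v : Fin n → ℝ, v ≠ 0 ∧ (Mᵀ * M) *ᵥ v = α₁ • v)
    (hmin : ∀ (β : ℝ) (v : Fin n → ℝ), v ≠ 0 → (Mᵀ * M) *ᵥ v = β • v → α₁ ≤ β)
    (Φ : ℕ → Matrix (Fin n) (Fin n) ℝ)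
    (hrec : ∀ k, Φ (k + 1) = (1 + μ • (Mᵀ * M))⁻¹ * (Φ k + μ • Mᵀ)) :
    Filter.Tendsto Φ Filter.atTop (nhds M⁻¹) ∧
    ∀ k, ‖Φ k - M⁻¹‖ ≤ (1 / (1 + α₁ * μ)) ^ k * ‖Φ 0 - M⁻¹‖ :=
  stmt18_general M hM μ α₁ hμ hα₁ hmin Φ hrec
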